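/- Let 𝒢 be a strongly connected directed graph on N nodes with Laplacian L, let r = (r₁,…,r_N) be the positive vector with rᵀL = 0 and rᵀ1_N = N, put R = diag(r) and L̂ = RL + LᵀR. Let l, q ≥ 1 and for each i = 1,…,N let T_{i1} ∈ ℝ^{l×l}, T_{i2} ∈ ℝ^{q×q} be orthogonal, let 0 ≤ v_{i1} ≤ l, 0 ≤ v_{i2} ≤ q, g_i > 0, and set G_{i1} = diag(g_i I_{v_{i1}}, 0_{(l−v_{i1})×(l−v_{i1})}), G_{i2} = diag(g_i I_{v_{i2}}, 0_{(q−v_{i2})×(q−v_{i2})}), T_a = blockdiag(T_{1a},…,T_{Na}) and G_a = blockdiag(G_{1a},…,G_{Na}) for a = 1,2. Assume: (i) the only w₁ ∈ ℝ^l such that for every i the first v_{i1} entries of T_{i1}ᵀw₁ vanish is w₁ = 0, and (ii) the only w₂ ∈ ℝ^q such that for every i the first v_{i2} entries of T_{i2}ᵀw₂ vanish is w₂ = 0. Then there exists a single μ > 0 such that T₁ᵀ(L̂ ⊗ I_l)T₁ + G₁ ⪰ μ I_{Nl} and T₂ᵀ(L̂ ⊗ I_q)T₂ + G₂ ⪰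 μ I_{Nq}. -/

import Mathlib

open Matrix
open scoped Kronecker

/-- Directed-graph Laplacian `L = D − 𝒜` with `D` the diagonal matrix of row sums of the
adjacency matrix. -/
def lap {N : ℕ} (Adj : Matrix (Fin N) (Fin N) ℝ) : Matrix (Fin N) (Fin N) ℝ :=
  Matrix.diagonal (fun i => ∑ j, Adj i j) - Adj

/-- `Adj i j = 1` encodes an arc from node `j` to node `i`; strong connectivity asks for a
directed path between any two distinct nodes. -/
def StronglyConnected {N : ℕ} (Adj : Matrix (Fin N) (Fin N) ℝ) : Prop :=
  ∀ i j : Fin N, i ≠ j → Relation.TransGen (fun a b => Adj b a = 1) i j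

/-- Characteristic polynomial `det (s E − A)` of the matrix pencil `(E, A)`. -/
noncomputable def pencilPoly {m : Type*} [Fintype m] [DecidableEq m]
    (E A : Matrix m m ℝ) : Polynomial ℝ :=
  ((Polynomial.X : Polynomial ℝ) • E.map Polynomial.C - A.map Polynomial.C).det

/-- The pencil `(E, A)` is regular if `det (s E − A)` is not the zero polynomial. -/
def PencilRegular {m : Type*} [Fintype m] [DecidableEq m] (E A : Matrix m m ℝ) : Prop :=
  pencilPoly E A ≠ 0

/-- The pencil `(E, A)` is stable if every complex root of `det (s E − A)` has negative
real part. -/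
def PencilStable {m : Type*} [Fintype m] [DecidableEq m] (E A : Matrix m m ℝ) : Prop :=
  ∀ z : ℂ, Polynomial.aeval z (pencilPoly E A) = 0 → z.re < 0

/-- The pencil `(E, A)` is impulse-free if `deg det (s E − A) = rank E`. -/
def PencilImpulseFree {m : Type*} [Fintype m] [DecidableEq m] (E A : Matrix m m ℝ) : Prop :=
  (pencilPoly E A).natDegree = E.rank

/-- Admissible = regular, stable and impulse-free. -/
def PencilAdmissible {m : Type*} [Fintype m] [DecidableEq m] (E A : Matrix m m ℝ) : Prop :=
  PencilRegular E A ∧ PencilStable E A ∧ PencilImpulseFree E A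

/-- A real square matrix is Hurwitz if all its complex eigenvalues have negative real part. -/
def IsHurwitz {m : Type*} [Fintype m] [DecidableEq m] (A : Matrix m m ℝ) : Prop :=
  ∀ z : ℂ, Polynomial.aeval z A.charpoly = 0 → z.re < 0

/-- Block-diagonal assembly of `N` (possibly rectangular) blocks of a common shape. -/
def bdiagR {N : ℕ} {m m' : Type*} (M : Fin N → Matrix m m' ℝ) :
    Matrix (Fin N × m) (Fin N × m') ℝ :=
  fun x y => if x.1 = y.1 then M x.1 x.2 y.2 else 0

/-- Largest singular value of a real matrix (its ℓ²-operator norm). -/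
noncomputable def specNorm {m : Type*} [Fintype m] [DecidableEq m] (M : Matrix m m ℝ) : ℝ :=
  ‖(Matrix.toEuclideanCLM (𝕜 := ℝ) M : EuclideanSpace ℝ m →L[ℝ] EuclideanSpace ℝ m)‖

/-!
Since `rᵀ L = 0`, the quadratic form of `L̂` is `∑ᵢⱼ rᵢ aᵢⱼ (xᵢ - xⱼ)²`, so `L̂ ⪰ 0` and, by
strong connectivity, `L̂ x = 0` only for constant `x`. If `x` is annihilated by both
`Tᵀ (L̂ ⊗ I) T` and `G`, then all the blocks `Tᵢ xᵢ` equal one vector `w`, and `xᵢ = Tᵢᵀ w`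
vanishes in its first `vᵢ` entries; observability forces `w = 0`, so `x = 0`. Hence each of the
two matrices is positive definite, has its spectrum above some `μₐ > 0`, and `μ = min μ₁ μ₂`
works for both.
-/

open scoped MatrixOrder in
theorem Matrix.PosDef.exists_pos_posSemidef_sub_smul_one {n : Type*} [Fintype n] [DecidableEq n]
    {M : Matrix n n ℝ} (hM : M.PosDef) : ∃ μ : ℝ, 0 < μ ∧ (M - μ • 1).PosSemidef := by
  cases isEmpty_or_nonempty n
  · exact ⟨1, one_pos, by simpa [Subsingleton.elim (M - _) M] using hM.posSemidef⟩
  obtain ⟨μ, hμ, hle⟩ := (CFC.exists_pos_algebraMap_le_iff hM.isHermitian.isSelfAdjoint).2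
    fun x hx => hM.isStrictlyPositive.spectrum_pos hx
  exact ⟨μ, hμ, by simpa [Algebra.algebraMap_eq_smul_one] using Matrix.le_iff.1 hle⟩

theorem Matrix.PosSemidef.sub_smul_one_of_le {n : Type*} [Fintype n] [DecidableEq n]
    {M : Matrix n n ℝ} {μ ν : ℝ} (hM : (M - μ • 1).PosSemidef) (hν : ν ≤ μ) :
    (M - ν • 1).PosSemidef := by
  have : M - ν • 1 = (M - μ • 1) + (μ - ν) • 1 := by rw [sub_smul]; abel
  exact this ▸ hM.add (PosSemidef.one.smul (sub_nonneg.2 hν))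

/-- The matrix `L̂ = R L + Lᵀ R`, `R = diag r`. -/
def symmLap {N : ℕ} (Adj : Matrix (Fin N) (Fin N) ℝ) (r : Fin N → ℝ) : Matrix (Fin N) (Fin N) ℝ :=
  diagonal r * lap Adj + (lap Adj)ᵀ * diagonal r

section Graph

variable {N : ℕ} {Adj : Matrix (Fin N) (Fin N) ℝ} {r : Fin N → ℝ}

theorem lap_mulVec_apply (x : Fin N → ℝ) (i : Fin N) :
    (lap Adj *ᵥ x) i = ∑ j, Adj i j * (x i - x j) := by
  rw [lap, sub_mulVec, Pi.sub_apply, mulVec_diagonal]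
  simp [mulVec, dotProduct, mul_sub, Finset.sum_mul]

theorem symmLap_isSymm : (symmLap Adj r).IsSymm := by
  simp [IsSymm, symmLap, transpose_add, transpose_mul, add_comm]

theorem dotProduct_symmLap_mulVec (hrL : r ᵥ* lap Adj = 0) (x : Fin N → ℝ) :
    x ⬝ᵥ (symmLap Adj r *ᵥ x) = ∑ i, ∑ j, r i * Adj i j * (x i - x j) ^ 2 := by
  have hcross : x ⬝ᵥ (symmLap Adj r *ᵥ x) = 2 * ∑ i, ∑ j, r i * Adj i j * (x i * (x i - x j)) := by
    simp only [symmLap, add_mulVec, dotProduct_add, ← mulVec_mulVec, dotProduct_mulVec x _ᵀ,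
      vecMul_transpose]
    simp only [dotProduct, mulVec_diagonal, lap_mulVec_apply, Finset.mul_sum, Finset.sum_mul,
      ← Finset.sum_add_distrib]
    exact Finset.sum_congr rfl fun i _ => Finset.sum_congr rfl fun j _ => by ring
  -- `rᵀ L = 0` applied to the vector of squares balances the diagonal terms
  have hsq : ∑ i, ∑ j, r i * Adj i j * (x i ^ 2 - x j ^ 2) = 0 := by
    have := congrArg (· ⬝ᵥ fun i => x i ^ 2) hrL
    simp only [zero_dotProduct, ← dotProduct_mulVec] at this
    simpa [dotProduct, lap_mulVec_apply, Finset.mul_sum, mul_assoc] using this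
  rw [hcross, ← sub_zero (2 * _), ← hsq, Finset.mul_sum, ← Finset.sum_sub_distrib]
  refine Finset.sum_congr rfl fun i _ => ?_
  rw [Finset.mul_sum, ← Finset.sum_sub_distrib]
  exact Finset.sum_congr rfl fun j _ => by ring

theorem symmLap_posSemidef (hAdj : ∀ i j, 0 ≤ Adj i j) (hr : ∀ i, 0 ≤ r i)
    (hrL : r ᵥ* lap Adj = 0) : (symmLap Adj r).PosSemidef := by
  refine .of_dotProduct_mulVec_nonneg (isHermitian_iff_isSymm.2 symmLap_isSymm) fun x => ?_
  rw [star_trivial, dotProduct_symmLap_mulVec hrL]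
  exact Finset.sum_nonneg fun i _ => Finset.sum_nonneg fun j _ => by
    have := mul_nonneg (hr i) (hAdj i j)
    positivity

theorem eq_of_symmLap_mulVec_eq_zero (hAdj : ∀ i j, 0 ≤ Adj i j) (hconn : StronglyConnected Adj)
    (hr : ∀ i, 0 < r i) (hrL : r ᵥ* lap Adj = 0) {x : Fin N → ℝ}
    (hx : symmLap Adj r *ᵥ x = 0) (i j : Fin N) : x i = x j := by
  have hterm : ∀ i j, 0 ≤ r i * Adj i j * (x i - x j) ^ 2 := fun i j =>
    mul_nonneg (mul_nonneg (hr i).le (hAdj i j)) (sq_nonneg _)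
  have hsum : ∑ i, ∑ j, r i * Adj i j * (x i - x j) ^ 2 = 0 := by
    rw [← dotProduct_symmLap_mulVec hrL, hx, dotProduct_zero]
  have harc : ∀ a b, Adj b a = 1 → x b = x a := by
    intro a b hab
    have h := (Finset.sum_eq_zero_iff_of_nonneg fun _ _ => hterm _ _).1
      ((Finset.sum_eq_zero_iff_of_nonneg fun i _ => Finset.sum_nonneg fun j _ => hterm i j).1
        hsum b (Finset.mem_univ _)) a (Finset.mem_univ _)
    rw [hab, mul_one, mul_eq_zero, sq_eq_zero_iff, sub_eq_zero] at h
    exact h.resolve_left (hr b).ne'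
  rcases eq_or_ne i j with rfl | hij
  · rfl
  obtain hpath := hconn i j hij
  clear hij
  induction hpath with
  | single h => exact (harc _ _ h).symm
  | tail _ h ih => exact ih.trans (harc _ _ h).symm

end Graph

section Blocks

variable {N : ℕ} {m : Type*}

theorem bdiagR_mulVec_apply {m' : Type*} [Fintype m'] (M : Fin N → Matrix m m' ℝ)
    (x : Fin N × m' → ℝ) (i : Fin N) (a : m) :
    (bdiagR M *ᵥ x) (i, a) = (M i *ᵥ fun b => x (i, b)) a := by
  simp [bdiagR, mulVec, dotProduct, Fintype.sum_prod_type, ite_mul]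

theorem bdiagR_diagonal [DecidableEq m] (d : Fin N → m → ℝ) :
    bdiagR (fun i => diagonal (d i)) = diagonal fun p => d p.1 p.2 := by
  ext ⟨i, a⟩ ⟨j, b⟩
  by_cases hij : i = j
  · subst hij; simp [bdiagR, diagonal_apply]
  · simp [bdiagR, hij]

theorem kronecker_one_mulVec_apply [Fintype m] [DecidableEq m] {ι : Type*} [Fintype ι]
    (K : Matrix ι ι ℝ) (y : ι × m → ℝ) (i : ι) (a : m) :
    ((K ⊗ₖ (1 : Matrix m m ℝ)) *ᵥ y) (i, a) = (K *ᵥ fun j => y (j, a)) i := by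
  simp [mulVec, dotProduct, kroneckerMap_apply, Fintype.sum_prod_type, one_apply]

theorem Matrix.PosSemidef.mulVec_mulVec_eq_zero_of_transpose_mul_mul [Fintype m] {ι : Type*}
    [Fintype ι] {K : Matrix ι ι ℝ} (hK : K.PosSemidef) {B : Matrix ι m ℝ} {x : m → ℝ}
    (hx : (Bᵀ * K * B) *ᵥ x = 0) : K *ᵥ (B *ᵥ x) = 0 := by
  refine (hK.dotProduct_mulVec_zero_iff _).1 ?_
  have h := congrArg (x ⬝ᵥ ·) hx
  simp only [dotProduct_zero, Matrix.mul_assoc, ← mulVec_mulVec, dotProduct_mulVec x Bᵀ,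
    vecMul_transpose] at h
  rwa [star_trivial]

theorem Matrix.PosSemidef.posDef_add_of_mulVec_eq_zero [Fintype m] {A B : Matrix m m ℝ}
    (hA : A.PosSemidef) (hB : B.PosSemidef)
    (h : ∀ x, A *ᵥ x = 0 → B *ᵥ x = 0 → x = 0) : (A + B).PosDef := by
  refine .of_dotProduct_mulVec_pos (hA.isHermitian.add hB.isHermitian) fun x hx => ?_
  have hA0 := hA.dotProduct_mulVec_nonneg x
  have hB0 := hB.dotProduct_mulVec_nonneg x
  rw [add_mulVec, dotProduct_add]
  refine (add_nonneg hA0 hB0).lt_of_ne fun h0 => hx (h x ?_ ?_)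
  · exact (hA.dotProduct_mulVec_zero_iff x).1 (by linarith)
  · exact (hB.dotProduct_mulVec_zero_iff x).1 (by linarith)

theorem posDef_transpose_mul_kronecker_one_mul_add_bdiagR [Fintype m] [DecidableEq m]
    {K : Matrix (Fin N) (Fin N) ℝ} (hK : K.PosSemidef)
    (hker : ∀ x, K *ᵥ x = 0 → ∀ i j, x i = x j)
    {T : Fin N → Matrix m m ℝ} (hT : ∀ i, (T i)ᵀ * T i = 1)
    {d : Fin N → m → ℝ} (hd : ∀ i a, 0 ≤ d i a)
    (hobs : ∀ w : m → ℝ, (∀ i a, d i a ≠ 0 → ((T i)ᵀ *ᵥ w) a = 0) → w = 0) :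
    ((bdiagR T)ᵀ * (K ⊗ₖ (1 : Matrix m m ℝ)) * bdiagR T
      + bdiagR fun i => diagonal (d i)).PosDef := by
  have hKI := hK.kronecker (PosSemidef.one (n := m))
  rw [bdiagR_diagonal]
  refine PosSemidef.posDef_add_of_mulVec_eq_zero ?_ (PosSemidef.diagonal fun p => hd p.1 p.2)
    fun x hx hdx => ?_
  · simpa [conjTranspose_eq_transpose_of_trivial] using hKI.conjTranspose_mul_mul_same (bdiagR T)
  have hTx := hKI.mulVec_mulVec_eq_zero_of_transpose_mul_mul hx
  have hconst : ∀ j k b, (bdiagR T *ᵥ x) (j, b) = (bdiagR T *ᵥ x) (k, b) := fun j k b =>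
    hker (fun j => (bdiagR T *ᵥ x) (j, b))
      (funext fun l => by rw [← kronecker_one_mulVec_apply, hTx]; rfl) j k
  ext ⟨i, a⟩
  -- all blocks `T j x_j` agree, so every `x_j` is `(T j)ᵀ w` for one `w`
  set w := T i *ᵥ fun b => x (i, b)
  have hblock : ∀ j, (fun b => x (j, b)) = (T j)ᵀ *ᵥ w := by
    intro j
    have hTj : T j *ᵥ (fun b => x (j, b)) = w := funext fun b => by
      rw [← bdiagR_mulVec_apply, hconst j i b, bdiagR_mulVec_apply]
    rw [← hTj, mulVec_mulVec, hT, one_mulVec]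
  have hw : w = 0 := hobs w fun j b hjb => by
    rw [← congrFun (hblock j) b]
    simpa [mulVec_diagonal, hjb] using congrFun hdx (j, b)
  simpa [hw] using congrFun (hblock i) a

end Blocks

theorem stmt_3_general {N l q : ℕ}
    (Adj : Matrix (Fin N) (Fin N) ℝ)
    (hAdj : ∀ i j, Adj i j = 0 ∨ Adj i j = 1)
    (hconn : StronglyConnected Adj)
    (r : Fin N → ℝ) (hr : ∀ i, 0 < r i) (hrL : r ᵥ* lap Adj = 0)
    (Lh : Matrix (Fin N) (Fin N) ℝ)
    (hLh : Lh = Matrix.diagonal r * lap Adj + (lap Adj)ᵀ * Matrix.diagonal r)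
    (T1 : Fin N → Matrix (Fin l) (Fin l) ℝ) (hT1 : ∀ i, (T1 i)ᵀ * T1 i = 1)
    (T2 : Fin N → Matrix (Fin q) (Fin q) ℝ) (hT2 : ∀ i, (T2 i)ᵀ * T2 i = 1)
    (v1 v2 : Fin N → ℕ)
    (g : Fin N → ℝ) (hg : ∀ i, 0 < g i)
    (hobs1 : ∀ w1 : Fin l → ℝ,
      (∀ i, ∀ a : Fin l, (a : ℕ) < v1 i → ((T1 i)ᵀ *ᵥ w1) a = 0) → w1 = 0)
    (hobs2 : ∀ w2 : Fin q → ℝ,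
      (∀ i, ∀ b : Fin q, (b : ℕ) < v2 i → ((T2 i)ᵀ *ᵥ w2) b = 0) → w2 = 0)
    (Tb1 G1 : Matrix (Fin N × Fin l) (Fin N × Fin l) ℝ)
    (Tb2 G2 : Matrix (Fin N × Fin q) (Fin N × Fin q) ℝ)
    (hTb1 : Tb1 = bdiagR T1) (hTb2 : Tb2 = bdiagR T2)
    (hG1 : G1 = bdiagR (fun i =>
        Matrix.diagonal fun a : Fin l => if (a : ℕ) < v1 i then g i else 0))
    (hG2 : G2 = bdiagR (fun i =>
        Matrix.diagonal fun b : Fin q => if (b : ℕ) < v2 i then g i else 0)) :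
    ∃ μ : ℝ, 0 < μ ∧
      (Tb1ᵀ * (Lh ⊗ₖ (1 : Matrix (Fin l) (Fin l) ℝ)) * Tb1 + G1 - μ • 1).PosSemidef ∧
      (Tb2ᵀ * (Lh ⊗ₖ (1 : Matrix (Fin q) (Fin q) ℝ)) * Tb2 + G2 - μ • 1).PosSemidef := by
  subst hLh hTb1 hTb2 hG1 hG2
  have hAdj₀ : ∀ i j, 0 ≤ Adj i j := fun i j => by rcases hAdj i j with h | h <;> simp [h]
  have hLpsd := symmLap_posSemidef hAdj₀ (fun i => (hr i).le) hrL
  have hLker := fun x hx => eq_of_symmLap_mulVec_eq_zero hAdj₀ hconn hr hrL (x := x) hx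
  have hPD : ∀ {k : ℕ} (T : Fin N → Matrix (Fin k) (Fin k) ℝ) (v : Fin N → ℕ),
      (∀ i, (T i)ᵀ * T i = 1) →
      (∀ w : Fin k → ℝ, (∀ i, ∀ a : Fin k, (a : ℕ) < v i → ((T i)ᵀ *ᵥ w) a = 0) → w = 0) →
      ((bdiagR T)ᵀ * (symmLap Adj r ⊗ₖ 1) * bdiagR T
        + bdiagR fun i => diagonal fun a : Fin k => if (a : ℕ) < v i then g i else 0).PosDef :=
    fun T v hT hobs => posDef_transpose_mul_kronecker_one_mul_add_bdiagR hLpsd hLker hT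
      (fun i a => by split_ifs <;> simp [(hg i).le])
      fun w hw => hobs w fun i a ha => hw i a (by simp [ha, (hg i).ne'])
  obtain ⟨μ₁, hμ₁, h₁⟩ := (hPD T1 v1 hT1 hobs1).exists_pos_posSemidef_sub_smul_one
  obtain ⟨μ₂, hμ₂, h₂⟩ := (hPD T2 v2 hT2 hobs2).exists_pos_posSemidef_sub_smul_one
  exact ⟨min μ₁ μ₂, lt_min hμ₁ hμ₂, h₁.sub_smul_one_of_le (min_le_left _ _),
    h₂.sub_smul_one_of_le (min_le_right _ _)⟩

/-- Two-block joint-observability Lemma (Lemma 5 of the paper): a single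
`μ > 0` works simultaneously for the slow (`l`-dimensional) and fast (`q`-dimensional)
coordinates. -/
theorem stmt_3 {N l q : ℕ} (hl : 1 ≤ l) (hq : 1 ≤ q)
    (Adj : Matrix (Fin N) (Fin N) ℝ)
    (hAdj : ∀ i j, Adj i j = 0 ∨ Adj i j = 1)
    (hconn : StronglyConnected Adj)
    (r : Fin N → ℝ) (hr : ∀ i, 0 < r i) (hrL : r ᵥ* lap Adj = 0)
    (hrsum : (∑ i, r i) = (N : ℝ))
    (Lh : Matrix (Fin N) (Fin N) ℝ)
    (hLh : Lh = Matrix.diagonal r * lap Adj + (lap Adj)ᵀ * Matrix.diagonal r)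
    (T1 : Fin N → Matrix (Fin l) (Fin l) ℝ) (hT1 : ∀ i, (T1 i)ᵀ * T1 i = 1)
    (T2 : Fin N → Matrix (Fin q) (Fin q) ℝ) (hT2 : ∀ i, (T2 i)ᵀ * T2 i = 1)
    (v1 v2 : Fin N → ℕ) (hv1 : ∀ i, v1 i ≤ l) (hv2 : ∀ i, v2 i ≤ q)
    (g : Fin N → ℝ) (hg : ∀ i, 0 < g i)
    (hobs1 : ∀ w1 : Fin l → ℝ,
      (∀ i, ∀ a : Fin l, (a : ℕ) < v1 i → ((T1 i)ᵀ *ᵥ w1) a = 0) → w1 = 0)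
    (hobs2 : ∀ w2 : Fin q → ℝ,
      (∀ i, ∀ b : Fin q, (b : ℕ) < v2 i → ((T2 i)ᵀ *ᵥ w2) b = 0) → w2 = 0)
    (Tb1 G1 : Matrix (Fin N × Fin l) (Fin N × Fin l) ℝ)
    (Tb2 G2 : Matrix (Fin N × Fin q) (Fin N × Fin q) ℝ)
    (hTb1 : Tb1 = bdiagR T1) (hTb2 : Tb2 = bdiagR T2)
    (hG1 : G1 = bdiagR (fun i =>
        Matrix.diagonal fun a : Fin l => if (a : ℕ) < v1 i then g i else 0))
    (hG2 : G2 = bdiagR (fun i =>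
        Matrix.diagonal fun b : Fin q => if (b : ℕ) < v2 i then g i else 0)) :
    ∃ μ : ℝ, 0 < μ ∧
      (Tb1ᵀ * (Lh ⊗ₖ (1 : Matrix (Fin l) (Fin l) ℝ)) * Tb1 + G1 - μ • 1).PosSemidef ∧
      (Tb2ᵀ * (Lh ⊗ₖ (1 : Matrix (Fin q) (Fin q) ℝ)) * Tb2 + G2 - μ • 1).PosSemidef :=
  stmt_3_general Adj hAdj hconn r hr hrL Lh hLh T1 hT1 T2 hT2 v1 v2 g hg hobs1 hobs2 Tb1 G1 Tb2 G2
    hTb1 hTb2 hG1 hG2
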